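/- arXiv:1011.4732 — 3 statements merged into one kernel-verified Lean document; each statement's English description precedes it below -/
import Mathlib

section
/- Let C_i > 0 with ∑_{i=1}^∞ C_i = κ < ∞, ζ > 0, and ξ_i > 0 strictly increasing. For each m, let C_i^{(m)} ∈ [0, C_i] with C_i^{(m)} = 0 for i > m and C_i^{(m)} → C_i as m → ∞ for each i, and set δ_m := κ − ∑_{i=1}^m C_i^{(m)}. Define W_ζ(x) = 1/ψ' − ∑_{i=1}^∞ C_i e^{-(ζ+ξ_i)x}, the upper bound \overline{W}^{(m)}(x) = 1/ψ' − ∑_{i=1}^m C_i^{(m)} e^{-(ζ+ξ_i)x}, and the lower bound \underline{W}^{(m)}(x) = \overline{W}^{(m)}(x) − δ_m [e^{-ζx} + e^{-(ζ+ξ_{m+1})x}]. Then for all x ≥ 0 and m ≥ 1, \underline{W}^{(m)}(x) ≤ W_ζ(x) ≤ \overline{W}^{(m)}(x). -/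
open Real Finset

/-!
Write `W_ζ(x) = 1/ψ' - ∑ C_i w_i` with weights `w_i = e^{-(ζ+ξ_i)x} ∈ [0, e^{-ζx}]`, and
`w_i ≤ e^{-(ζ+ξ_{m+1})x}` beyond the first `m` indices because `ξ` increases. Replacing `C_i` by
the smaller `C_i^{(m)}` on the head and dropping the tail gives the upper bound. For the lower
bound, the head defect `∑_{i≤m} (C_i - C_i^{(m)}) w_i` is at most its mass times `e^{-ζx}`, the
tail `∑_{i>m} C_i w_i` at most its mass times `e^{-(ζ+ξ_{m+1})x}`, and these two masses add up
to `δ_m`.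
-/

section WeightedSums

variable {c a w : ℕ → ℝ} {m : ℕ}

theorem sum_mul_le_tsum_mul (hac : ∀ i, a i ≤ c i) (hc : ∀ i, 0 ≤ c i) (hw : ∀ i, 0 ≤ w i)
    (hs : Summable fun i => c i * w i) :
    ∑ i ∈ range m, a i * w i ≤ ∑' i, c i * w i :=
  calc ∑ i ∈ range m, a i * w i ≤ ∑ i ∈ range m, c i * w i :=
        sum_le_sum fun i _ => mul_le_mul_of_nonneg_right (hac i) (hw i)
    _ ≤ ∑' i, c i * w i := hs.sum_le_tsum _ fun i _ => mul_nonneg (hc i) (hw i)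

theorem tsum_mul_le_sum_add {κ A B : ℝ} (hac : ∀ i, a i ≤ c i) (hc : ∀ i, 0 ≤ c i)
    (hκ : HasSum c κ) (hs : Summable fun i => c i * w i)
    (hwA : ∀ i < m, w i ≤ A) (hwB : ∀ i, m ≤ i → w i ≤ B) (hA : 0 ≤ A) (hB : 0 ≤ B) :
    ∑' i, c i * w i ≤
      ∑ i ∈ range m, a i * w i + (κ - ∑ i ∈ range m, a i) * (A + B) := by
  set S := ∑ i ∈ range m, (c i - a i)
  set T := ∑' i, c (i + m)
  have hS : 0 ≤ S := sum_nonneg fun i _ => sub_nonneg.2 (hac i)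
  have hT : 0 ≤ T := tsum_nonneg fun i => hc _
  have hmass : κ - ∑ i ∈ range m, a i = S + T := by
    rw [← hκ.tsum_eq, ← hκ.summable.sum_add_tsum_nat_add m, ]
    simp only [S, sum_sub_distrib]
    ring
  have hhead : ∑ i ∈ range m, c i * w i ≤ ∑ i ∈ range m, a i * w i + S * A := by
    rw [sum_mul, ← sum_add_distrib]
    refine sum_le_sum fun i hi => ?_
    have := mul_le_mul_of_nonneg_left (hwA i (mem_range.1 hi)) (sub_nonneg.2 (hac i))
    linarith
  have htail : ∑' i, c (i + m) * w (i + m) ≤ T * B := by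
    rw [← tsum_mul_right]
    exact ((summable_nat_add_iff m).2 hs).tsum_le_tsum
      (fun i => mul_le_mul_of_nonneg_left (hwB _ (Nat.le_add_left m i)) (hc _))
      (((summable_nat_add_iff m).2 hκ.summable).mul_right B)
  rw [← hs.sum_add_tsum_nat_add m, hmass]
  nlinarith [mul_nonneg hS hB, mul_nonneg hT hA]

end WeightedSums

/-- Indices are 0-based: `C i` corresponds to `C_{i+1}` and, for the approximation of level `m`,
the terms `i < m` are used and `ξ m` plays the role of `ξ_{m+1}`. -/
theorem scale_function_finite_sum_bounds_general (ζ ψ' κ : ℝ)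
    (ξ C : ℕ → ℝ) (hξpos : ∀ i, 0 < ξ i) (hξmono : StrictMono ξ)
    (hCsum : HasSum C κ)
    (Cm : ℕ → ℕ → ℝ)
    (hCm_le : ∀ m i, 0 ≤ Cm m i ∧ Cm m i ≤ C i)
    (δ : ℕ → ℝ) (hδ : ∀ m, δ m = κ - ∑ i ∈ Finset.range m, Cm m i)
    (Wζ : ℝ → ℝ)
    (hWζ : ∀ x, Wζ x = 1 / ψ' - ∑' i, C i * Real.exp (-(ζ + ξ i) * x))
    (Wup Wlo : ℕ → ℝ → ℝ)
    (hWup : ∀ m x, Wup m x = 1 / ψ' - ∑ i ∈ Finset.range m, Cm m i * Real.exp (-(ζ + ξ i) * x))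
    (hWlo : ∀ m x, Wlo m x =
      Wup m x - δ m * (Real.exp (-ζ * x) + Real.exp (-(ζ + ξ m) * x))) :
    ∀ (m : ℕ) (x : ℝ), 1 ≤ m → 0 ≤ x → Wlo m x ≤ Wζ x ∧ Wζ x ≤ Wup m x := by
  intro m x _ hx
  have hC : ∀ i, 0 ≤ C i := fun i => (hCm_le 0 i).1.trans (hCm_le 0 i).2
  have hw : ∀ i, 0 ≤ exp (-(ζ + ξ i) * x) := fun i => (exp_pos _).le
  have hwA : ∀ i, exp (-(ζ + ξ i) * x) ≤ exp (-ζ * x) := fun i =>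
    exp_le_exp.2 (by nlinarith [hξpos i])
  have hwB : ∀ i, m ≤ i → exp (-(ζ + ξ i) * x) ≤ exp (-(ζ + ξ m) * x) := fun i hi =>
    exp_le_exp.2 (by nlinarith [hξmono.monotone hi])
  have hs : Summable fun i => C i * exp (-(ζ + ξ i) * x) :=
    (hCsum.summable.mul_right _).of_nonneg_of_le (fun i => mul_nonneg (hC i) (hw i))
      fun i => mul_le_mul_of_nonneg_left (hwA i) (hC i)
  have hlower := tsum_mul_le_sum_add (fun i => (hCm_le m i).2) hC hCsum hs
    (fun i _ => hwA i) hwB (exp_pos _).le (exp_pos _).le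
  have hupper := sum_mul_le_tsum_mul (m := m) (fun i => (hCm_le m i).2) hC hw hs
  rw [hWlo, hWup, hWζ, hδ]
  constructor <;> linarith

/-- Finite-sum upper and lower bounds on the scale function `W_ζ`. Indices are
0-based: `C i` corresponds to `C_{i+1}` and, for the approximation of level `m`,
the terms `i < m` are used and `ξ m` plays the role of `ξ_{m+1}`. -/
theorem scale_function_finite_sum_bounds (ζ ψ' κ : ℝ) (hζ : 0 < ζ) (hψ' : 0 < ψ')
    (ξ C : ℕ → ℝ) (hξpos : ∀ i, 0 < ξ i) (hξmono : StrictMono ξ)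
    (hCpos : ∀ i, 0 < C i) (hCsum : HasSum C κ)
    (Cm : ℕ → ℕ → ℝ)
    (hCm_le : ∀ m i, 0 ≤ Cm m i ∧ Cm m i ≤ C i)
    (hCm_zero : ∀ m i, m ≤ i → Cm m i = 0)
    (δ : ℕ → ℝ) (hδ : ∀ m, δ m = κ - ∑ i ∈ Finset.range m, Cm m i)
    (Wζ : ℝ → ℝ)
    (hWζ : ∀ x, Wζ x = 1 / ψ' - ∑' i, C i * Real.exp (-(ζ + ξ i) * x))
    (Wup Wlo : ℕ → ℝ → ℝ)
    (hWup : ∀ m x, Wup m x = 1 / ψ' - ∑ i ∈ Finset.range m, Cm m i * Real.exp (-(ζ + ξ i) * x))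
    (hWlo : ∀ m x, Wlo m x =
      Wup m x - δ m * (Real.exp (-ζ * x) + Real.exp (-(ζ + ξ m) * x))) :
    ∀ (m : ℕ) (x : ℝ), 1 ≤ m → 0 ≤ x → Wlo m x ≤ Wζ x ∧ Wζ x ≤ Wup m x :=
  scale_function_finite_sum_bounds_general ζ ψ' κ ξ C hξpos hξmono hCsum Cm hCm_le δ hδ Wζ hWζ Wup
    Wlo hWup hWlo
end

section
/- With the same notation, if δ_m → 0 as m → ∞, then for any x_0 > 0, \underline{w}^{(m)} → W' and \overline{w}^{(m)} → W' uniformly on [x_0, ∞). -/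
open Real Finset Set Filter

/-!
The error `W' - w̲⁽ᵐ⁾` equals `∑ᵢ (Cᵢ - C⁽ᵐ⁾ᵢ) ξᵢ e^{-ξᵢ x}`, a nonnegative combination of the functions
`ξᵢ e^{-ξᵢ x}` with total weight `δₘ`, and the gap `w̄⁽ᵐ⁾ - w̲⁽ᵐ⁾` is `δₘ` times a sum of two suprema of
the same functions. Since `λ e^{-λ x} ≤ 1 / (e x₀)` for all `λ ≥ 0` and `x ≥ x₀`, both errors are
bounded on `[x₀, ∞)` by a constant multiple of `δₘ`.
-/

lemma mul_exp_neg_mul_mem_Icc {t x₀ x : ℝ} (ht : 0 ≤ t) (hx₀ : 0 < x₀) (hx : x₀ ≤ x) :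
    t * exp (-t * x) ∈ Icc 0 (exp 1 * x₀)⁻¹ := by
  refine ⟨by positivity, ?_⟩
  calc t * exp (-t * x) ≤ t * exp (-(t * x₀)) := by
        rw [neg_mul]; gcongr
    _ = t * x₀ * exp (-(t * x₀)) / x₀ := by field_simp
    _ ≤ exp (-1) / x₀ := by gcongr; exact mul_exp_neg_le_exp_neg_one _
    _ = (exp 1 * x₀)⁻¹ := by rw [exp_neg]; field_simp

lemma abs_sSup_le_of_subset_Icc {s : Set ℝ} {M : ℝ} (hs : s ⊆ Icc 0 M) (hM : 0 ≤ M) :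
    |sSup s| ≤ M := by
  rw [abs_of_nonneg (Real.sSup_nonneg fun y hy => (hs hy).1)]
  exact Real.sSup_le (fun y hy => (hs hy).2) hM

section WeightedSums

variable {ι : Type*} {d f : ι → ℝ} {M : ℝ}

lemma summable_mul_of_mem_Icc (hd : ∀ i, 0 ≤ d i) (hds : Summable d) (hf : ∀ i, f i ∈ Icc 0 M) :
    Summable fun i => d i * f i :=
  (hds.mul_right M).of_nonneg_of_le (fun i => mul_nonneg (hd i) (hf i).1)
    (fun i => mul_le_mul_of_nonneg_left (hf i).2 (hd i))

lemma abs_tsum_mul_le_of_mem_Icc (hd : ∀ i, 0 ≤ d i) (hds : Summable d)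
    (hf : ∀ i, f i ∈ Icc 0 M) : |∑' i, d i * f i| ≤ M * ∑' i, d i := by
  rw [abs_of_nonneg (tsum_nonneg fun i => mul_nonneg (hd i) (hf i).1), mul_comm,
    ← tsum_mul_right]
  exact (summable_mul_of_mem_Icc hd hds hf).tsum_le_tsum
    (fun i => mul_le_mul_of_nonneg_left (hf i).2 (hd i)) (hds.mul_right M)

end WeightedSums

lemma abs_tsum_mul_sub_sum_range_mul_le {a b f : ℕ → ℝ} {m : ℕ} {M : ℝ}
    (hb : ∀ i, 0 ≤ b i ∧ b i ≤ a i) (hbm : ∀ i, m ≤ i → b i = 0) (ha : Summable a)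
    (hf : ∀ i, f i ∈ Icc 0 M) :
    |∑' i, a i * f i - ∑ i ∈ range m, b i * f i| ≤ M * (∑' i, a i - ∑ i ∈ range m, b i) := by
  have hsupp : ∀ i ∉ range m, b i = 0 := fun i hi => hbm i (by simpa using hi)
  have hbs : Summable b := summable_of_ne_finset_zero hsupp
  have hab : ∀ i, 0 ≤ a i - b i := fun i => sub_nonneg.2 (hb i).2
  have haf := summable_mul_of_mem_Icc (fun i => (hb i).1.trans (hb i).2) ha hf
  have hbf := summable_mul_of_mem_Icc (fun i => (hb i).1) hbs hf
  have hbsum : ∑' i, b i = ∑ i ∈ range m, b i := tsum_eq_sum hsupp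
  have hbfsum : ∑' i, b i * f i = ∑ i ∈ range m, b i * f i :=
    tsum_eq_sum fun i hi => by rw [hsupp i hi, zero_mul]
  rw [← hbsum, ← hbfsum, ← ha.tsum_sub hbs, ← haf.tsum_sub hbf]
  simpa only [sub_mul] using abs_tsum_mul_le_of_mem_Icc hab (ha.sub hbs) hf

lemma tendstoUniformlyOn_of_dist_le_mul {α β ι : Type*} [PseudoMetricSpace β] {l : Filter ι}
    {F : ι → α → β} {f : α → β} {s : Set α} {δ : ι → ℝ} {c : ℝ} (hδ : Tendsto δ l (nhds 0))
    (h : ∀ n, ∀ x ∈ s, dist (f x) (F n x) ≤ c * δ n) : TendstoUniformlyOn F f l s := by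
  rw [Metric.tendstoUniformlyOn_iff]
  intro ε hε
  have hcδ : Tendsto (fun n => c * δ n) l (nhds 0) := by simpa using hδ.const_mul c
  filter_upwards [hcδ.eventually_lt_const hε] with n hn x hx
  exact (h n x hx).trans_lt hn

theorem scale_function_deriv_bounds_uniform_convergence_general (K ζ κ : ℝ)
    (ξ C : ℕ → ℝ) (hξpos : ∀ i, 0 < ξ i)
    (hCsum : HasSum C κ)
    (Cm : ℕ → ℕ → ℝ)
    (hCm_le : ∀ m i, 0 ≤ Cm m i ∧ Cm m i ≤ C i)
    (hCm_zero : ∀ m i, m ≤ i → Cm m i = 0)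
    (δ : ℕ → ℝ) (hδ : ∀ m, δ m = κ - ∑ i ∈ Finset.range m, Cm m i)
    (hδ0 : Filter.Tendsto δ Filter.atTop (nhds 0))
    (W' : ℝ → ℝ)
    (hW' : ∀ x, W' x = K * ζ * Real.exp (ζ * x) + ∑' i, C i * ξ i * Real.exp (-ξ i * x))
    (wlo wup : ℕ → ℝ → ℝ)
    (hwlo : ∀ m x, wlo m x =
      K * ζ * Real.exp (ζ * x) + ∑ i ∈ Finset.range m, Cm m i * ξ i * Real.exp (-ξ i * x))
    (hwup : ∀ m x, wup m x = wlo m x +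
      (sSup ((fun k => ξ k * Real.exp (-ξ k * x)) '' {k : ℕ | k < m}) +
       sSup ((fun k => ξ k * Real.exp (-ξ k * x)) '' {k : ℕ | m ≤ k})) * δ m) :
    ∀ x₀ : ℝ, 0 < x₀ →
      TendstoUniformlyOn (fun m x => wlo m x) W' Filter.atTop (Set.Ici x₀) ∧
      TendstoUniformlyOn (fun m x => wup m x) W' Filter.atTop (Set.Ici x₀) := by
  intro x₀ hx₀
  set M := (exp 1 * x₀)⁻¹
  have hM : 0 < M := by positivity
  have hmem : ∀ x ∈ Ici x₀, ∀ i, ξ i * exp (-ξ i * x) ∈ Icc 0 M :=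
    fun x hx i => mul_exp_neg_mul_mem_Icc (hξpos i).le hx₀ hx
  have hlo : ∀ m, ∀ x ∈ Ici x₀, dist (W' x) (wlo m x) ≤ M * δ m := by
    intro m x hx
    have h := abs_tsum_mul_sub_sum_range_mul_le (hCm_le m) (hCm_zero m) hCsum.summable (hmem x hx)
    rw [hCsum.tsum_eq, ← hδ] at h
    rw [dist_eq, hW', hwlo, add_sub_add_left_eq_sub]
    simpa only [mul_assoc] using h
  have hδ_nonneg : ∀ m, 0 ≤ δ m :=
    fun m => nonneg_of_mul_nonneg_right (dist_nonneg.trans (hlo m x₀ self_mem_Ici)) hM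
  have hup : ∀ m, ∀ x ∈ Ici x₀, dist (W' x) (wup m x) ≤ 3 * M * δ m := by
    intro m x hx
    have hsup (s : Set ℕ) : |sSup ((fun k => ξ k * exp (-ξ k * x)) '' s)| ≤ M :=
      abs_sSup_le_of_subset_Icc (image_subset_iff.2 fun k _ => hmem x hx k) hM.le
    calc dist (W' x) (wup m x) ≤ dist (W' x) (wlo m x) + dist (wlo m x) (wup m x) :=
          dist_triangle _ _ _
      _ ≤ M * δ m + (M + M) * δ m := by
          rw [hwup, dist_self_add_right, norm_eq_abs, abs_mul, abs_of_nonneg (hδ_nonneg m)]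
          exact add_le_add (hlo m x hx) (mul_le_mul_of_nonneg_right
            ((abs_add_le _ _).trans (add_le_add (hsup _) (hsup _))) (hδ_nonneg m))
      _ = 3 * M * δ m := by ring
  exact ⟨tendstoUniformlyOn_of_dist_le_mul hδ0 hlo, tendstoUniformlyOn_of_dist_le_mul hδ0 hup⟩

/-- If `δ_m → 0`, the finite-sum bounds on the derivative of the scale function
converge to it uniformly on `[x₀,∞)` for every `x₀ > 0`. -/
theorem scale_function_deriv_bounds_uniform_convergence (K ζ κ : ℝ) (hK : 0 < K) (hζ : 0 < ζ)
    (ξ C : ℕ → ℝ) (hξpos : ∀ i, 0 < ξ i) (hξmono : StrictMono ξ)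
    (hCpos : ∀ i, 0 < C i) (hCsum : HasSum C κ)
    (hsum : ∀ x : ℝ, 0 < x → Summable (fun i => C i * ξ i * Real.exp (-ξ i * x)))
    (Cm : ℕ → ℕ → ℝ)
    (hCm_le : ∀ m i, 0 ≤ Cm m i ∧ Cm m i ≤ C i)
    (hCm_zero : ∀ m i, m ≤ i → Cm m i = 0)
    (δ : ℕ → ℝ) (hδ : ∀ m, δ m = κ - ∑ i ∈ Finset.range m, Cm m i)
    (hδ0 : Filter.Tendsto δ Filter.atTop (nhds 0))
    (W' : ℝ → ℝ)
    (hW' : ∀ x, W' x = K * ζ * Real.exp (ζ * x) + ∑' i, C i * ξ i * Real.exp (-ξ i * x))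
    (wlo wup : ℕ → ℝ → ℝ)
    (hwlo : ∀ m x, wlo m x =
      K * ζ * Real.exp (ζ * x) + ∑ i ∈ Finset.range m, Cm m i * ξ i * Real.exp (-ξ i * x))
    (hwup : ∀ m x, wup m x = wlo m x +
      (sSup ((fun k => ξ k * Real.exp (-ξ k * x)) '' {k : ℕ | k < m}) +
       sSup ((fun k => ξ k * Real.exp (-ξ k * x)) '' {k : ℕ | m ≤ k})) * δ m) :
    ∀ x₀ : ℝ, 0 < x₀ →
      TendstoUniformlyOn (fun m x => wlo m x) W' Filter.atTop (Set.Ici x₀) ∧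
      TendstoUniformlyOn (fun m x => wup m x) W' Filter.atTop (Set.Ici x₀) :=
  scale_function_deriv_bounds_uniform_convergence_general K ζ κ ξ C hξpos hCsum Cm hCm_le hCm_zero δ
    hδ hδ0 W' hW' wlo wup hwlo hwup
end

section
/- Let ψ(s) = μs + (1/2)σ²s² − λ ∑_{i=1}^m α_i s/(η_i + s) with σ > 0, λ > 0, α_i > 0 summing to 1, and 0 < η_1 < ⋯ < η_m. Then for every q > 0 the equation ψ(s) = q, viewed on the negative real axis, has exactly m+1 roots −ξ_1 > −η_1 > −ξ_2 > ⋯ > −η_m > −ξ_{m+1}, i.e. the positive numbers ξ_1, …, ξ_{m+1} satisfy 0 < ξ_1 < η_1 < ξ_2 < ⋯ < η_m < ξ_{m+1} < ∞. -/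
open Finset Filter Topology Bornology Polynomial

/-!
Clearing denominators, `(ψ s - q) * ∏ i, (s + η i)` is a polynomial of degree at most `m + 2`
that does not vanish at `0`, so `ψ = q` has at most `m + 2` solutions off the poles. On the other
hand `ψ 0 = 0 < q`, `ψ → +∞` at `±∞`, and at each pole `-η i` the term `-λ α i s / (η i + s)`
sends `ψ` to `-∞` from the left and to `+∞` from the right. The intermediate value theorem thus
gives a solution in `(0, ∞)`, in `(-η 0, 0)`, in each gap `(-η (i + 1), -η i)` and in
`(-∞, -η (m - 1))`: these are `m + 2` solutions, hence all of them.
-/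

theorem tendsto_div_add_cobounded (η : ℝ) :
    Tendsto (fun s : ℝ => s / (η + s)) (cobounded ℝ) (𝓝 1) := by
  have h : Tendsto (fun s : ℝ => (η * s⁻¹ + 1)⁻¹) (cobounded ℝ) (𝓝 1) := by
    simpa using ((tendsto_inv₀_cobounded.const_mul η).add_const 1).inv₀ (by simp)
  refine h.congr' ?_
  filter_upwards [eventually_ne_cobounded 0] with s hs
  rw [show η * s⁻¹ + 1 = (η + s) / s by field_simp, inv_div]

theorem tendsto_quadratic_cobounded (μ : ℝ) {σ : ℝ} (hσ : σ ≠ 0) :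
    Tendsto (fun s : ℝ => μ * s + σ ^ 2 * s ^ 2 / 2) (cobounded ℝ) atTop := by
  have hsq : Tendsto (fun s : ℝ => s ^ 2) (cobounded ℝ) atTop := by
    simpa only [Function.comp_def, Real.norm_eq_abs, sq_abs] using
      (tendsto_pow_atTop two_ne_zero).comp (tendsto_norm_cobounded_atTop (E := ℝ))
  have h := hsq.atTop_mul_pos (C := σ ^ 2 / 2) (by positivity)
    ((tendsto_inv₀_cobounded.const_mul μ).const_add (σ ^ 2 / 2) |>.trans_eq (by simp))
  refine h.congr' ?_
  filter_upwards [eventually_ne_cobounded 0] with s hs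
  field_simp
  ring

theorem tendsto_div_add_nhdsGT_neg {η : ℝ} (hη : 0 < η) :
    Tendsto (fun s : ℝ => s / (η + s)) (𝓝[>] (-η)) atBot := by
  have h : Tendsto (fun s : ℝ => η + s) (𝓝[>] (-η)) (𝓝[>] 0) := by
    refine tendsto_nhdsWithin_iff.2 ⟨?_, ?_⟩
    · exact tendsto_nhdsWithin_of_tendsto_nhds <| by
        simpa using (continuous_const_add η).tendsto (-η)
    · filter_upwards [self_mem_nhdsWithin] with s (hs : -η < s)
      exact (by linarith : 0 < η + s)
  exact (tendsto_nhdsWithin_of_tendsto_nhds tendsto_id).neg_mul_atTop (by linarith)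
    (tendsto_inv_nhdsGT_zero.comp h)

theorem tendsto_div_add_nhdsLT_neg {η : ℝ} (hη : 0 < η) :
    Tendsto (fun s : ℝ => s / (η + s)) (𝓝[<] (-η)) atTop := by
  have h : Tendsto (fun s : ℝ => η + s) (𝓝[<] (-η)) (𝓝[<] 0) := by
    refine tendsto_nhdsWithin_iff.2 ⟨?_, ?_⟩
    · exact tendsto_nhdsWithin_of_tendsto_nhds <| by
        simpa using (continuous_const_add η).tendsto (-η)
    · filter_upwards [self_mem_nhdsWithin] with s (hs : s < -η)
      exact (by linarith : η + s < 0)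
  exact (tendsto_nhdsWithin_of_tendsto_nhds tendsto_id).neg_mul_atBot (by linarith)
    (tendsto_inv_nhdsLT_zero.comp h)

noncomputable def hyperexpExponent {ι : Type*} [Fintype ι] (μ σ lam : ℝ) (α η : ι → ℝ)
    (s : ℝ) : ℝ :=
  μ * s + σ ^ 2 * s ^ 2 / 2 - lam * ∑ i, α i * s / (η i + s)

section
variable {ι : Type*} [Fintype ι] {μ σ lam q : ℝ} {α η : ι → ℝ}

@[simp]
theorem hyperexpExponent_zero : hyperexpExponent μ σ lam α η 0 = 0 := by
  simp [hyperexpExponent]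

theorem continuousAt_hyperexpExponent {s : ℝ} (hs : ∀ i, s ≠ -η i) :
    ContinuousAt (hyperexpExponent μ σ lam α η) s := by
  have hne : ∀ i, η i + s ≠ 0 := fun i h => hs i (by linarith)
  unfold hyperexpExponent
  fun_prop (disch := exact hne _)

theorem hyperexpExponent_eq_sub_pole [DecidableEq ι] (i : ι) (s : ℝ) :
    hyperexpExponent μ σ lam α η s =
      hyperexpExponent μ σ lam (fun j : {j // j ≠ i} => α j) (fun j => η j) s
        - lam * α i * (s / (η i + s)) := by
  rw [hyperexpExponent, hyperexpExponent, Fintype.sum_eq_add_sum_subtype_ne _ i]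
  ring

theorem continuousAt_hyperexpExponent_erase_pole [DecidableEq ι] (hη : Function.Injective η)
    (i : ι) :
    ContinuousAt (hyperexpExponent μ σ lam (fun j : {j // j ≠ i} => α j) (fun j => η j)) (-η i) :=
  continuousAt_hyperexpExponent fun j h => j.2 (hη (neg_inj.1 h).symm)

theorem tendsto_hyperexpExponent_nhdsGT_pole (hlam : 0 < lam) (hα : ∀ i, 0 < α i)
    (hηpos : ∀ i, 0 < η i) (hη : Function.Injective η) (i : ι) :
    Tendsto (hyperexpExponent μ σ lam α η) (𝓝[>] (-η i)) atTop := by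
  classical
  have hpole : Tendsto (fun s => -lam * α i * (s / (η i + s))) (𝓝[>] (-η i)) atTop :=
    (tendsto_div_add_nhdsGT_neg (hηpos i)).const_mul_atBot_of_neg
      (by linarith [mul_pos hlam (hα i)])
  refine .congr (fun s => (hyperexpExponent_eq_sub_pole i s).symm) ?_
  simp_rw [sub_eq_add_neg, ← neg_mul]
  exact ((continuousAt_hyperexpExponent_erase_pole hη i).tendsto.mono_left
    nhdsWithin_le_nhds).add_atTop hpole

theorem tendsto_hyperexpExponent_nhdsLT_pole (hlam : 0 < lam) (hα : ∀ i, 0 < α i)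
    (hηpos : ∀ i, 0 < η i) (hη : Function.Injective η) (i : ι) :
    Tendsto (hyperexpExponent μ σ lam α η) (𝓝[<] (-η i)) atBot := by
  classical
  have hpole : Tendsto (fun s => -lam * α i * (s / (η i + s))) (𝓝[<] (-η i)) atBot :=
    (tendsto_div_add_nhdsLT_neg (hηpos i)).const_mul_atTop_of_neg
      (by linarith [mul_pos hlam (hα i)])
  refine .congr (fun s => (hyperexpExponent_eq_sub_pole i s).symm) ?_
  simp_rw [sub_eq_add_neg, ← neg_mul]
  exact ((continuousAt_hyperexpExponent_erase_pole hη i).tendsto.mono_left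
    nhdsWithin_le_nhds).add_atBot hpole

theorem tendsto_hyperexpExponent_cobounded (hσ : σ ≠ 0) :
    Tendsto (hyperexpExponent μ σ lam α η) (cobounded ℝ) atTop := by
  have hsum : Tendsto (fun s => lam * ∑ i, α i * (s / (η i + s))) (cobounded ℝ)
      (𝓝 (lam * ∑ i, α i * 1)) :=
    (tendsto_finsetSum _ fun i _ =>
      (tendsto_div_add_cobounded (η i)).const_mul (α i)).const_mul lam
  refine ((tendsto_quadratic_cobounded μ hσ).atTop_add hsum.neg).congr fun s => ?_
  simp only [hyperexpExponent, mul_div_assoc]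
  ring

noncomputable def hyperexpNumerator [DecidableEq ι] (μ σ lam q : ℝ) (α η : ι → ℝ) : ℝ[X] :=
  (C (σ ^ 2 / 2) * X ^ 2 + C μ * X - C q) * ∏ i, (X - C (-η i))
    - C lam * ∑ i, C (α i) * X * ∏ j ∈ univ.erase i, (X - C (-η j))

theorem eval_hyperexpNumerator [DecidableEq ι] {s : ℝ} (hs : ∀ i, s ≠ -η i) :
    (hyperexpNumerator μ σ lam q α η).eval s =
      (hyperexpExponent μ σ lam α η s - q) * ∏ i, (s - -η i) := by
  have hclear : ∀ i, α i * s * ∏ j ∈ univ.erase i, (s - -η j) =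
      α i * s / (η i + s) * ∏ j, (s - -η j) := fun i => by
    have : η i + s ≠ 0 := fun h => hs i (by linarith)
    rw [← mul_prod_erase univ _ (mem_univ i)]
    field_simp
    ring
  simp only [hyperexpNumerator, eval_sub, eval_mul, eval_add, eval_pow, eval_C, eval_X,
    eval_prod, eval_finsetSum, hclear, ← sum_mul, hyperexpExponent]
  ring

theorem natDegree_hyperexpNumerator_le [DecidableEq ι] :
    (hyperexpNumerator μ σ lam q α η).natDegree ≤ Fintype.card ι + 2 := by
  have hquad : (C (σ ^ 2 / 2) * X ^ 2 + C μ * X - C q : ℝ[X]).natDegree ≤ 2 := by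
    compute_degree
  have hterm : ∀ i, (C (α i) * X * ∏ j ∈ univ.erase i, (X - C (-η j))).natDegree
      ≤ Fintype.card ι + 2 := fun i => by
    refine natDegree_mul_le.trans ?_
    have : (C (α i) * X : ℝ[X]).natDegree ≤ 1 := by compute_degree
    have : (univ.erase i).card ≤ Fintype.card ι := (card_erase_le).trans_eq card_univ
    simp only [natDegree_finsetProd_X_sub_C_eq_card]
    omega
  refine (natDegree_sub_le _ _).trans (max_le ?_ ?_)
  · refine natDegree_mul_le.trans ?_
    simp only [natDegree_finsetProd_X_sub_C_eq_card, card_univ]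
    omega
  · exact natDegree_C_mul_le _ _ |>.trans (natDegree_sum_le_of_forall_le _ _ fun i _ => hterm i)

theorem card_le_of_forall_hyperexpExponent_eq (hq : q ≠ 0) (hη : ∀ i, η i ≠ 0)
    (T : Finset ℝ) (hT : ∀ s ∈ T, (∀ i, s ≠ -η i) ∧ hyperexpExponent μ σ lam α η s = q) :
    T.card ≤ Fintype.card ι + 2 := by
  classical
  have h0 : (hyperexpNumerator μ σ lam q α η).eval 0 ≠ 0 := by
    rw [eval_hyperexpNumerator fun i h => hη i (by linarith)]
    simpa [prod_ne_zero_iff] using ⟨hq, hη⟩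
  by_contra! hcard
  refine h0 ?_
  rw [eq_zero_of_natDegree_lt_card_of_eval_eq_zero' _ T (fun s hs => ?_)
    (natDegree_hyperexpNumerator_le.trans_lt hcard), eval_zero]
  rw [eval_hyperexpNumerator (hT s hs).1, (hT s hs).2, sub_self, zero_mul]

theorem continuousOn_hyperexpExponent {S : Set ℝ} (hS : ∀ i, -η i ∉ S) :
    ContinuousOn (hyperexpExponent μ σ lam α η) S := fun _ hs =>
  (continuousAt_hyperexpExponent fun i h => hS i (h ▸ hs)).continuousWithinAt

theorem eventually_hyperexpExponent_lt_nhds_zero (hq : 0 < q) (hη : ∀ i, η i ≠ 0) :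
    ∀ᶠ s in 𝓝 0, hyperexpExponent μ σ lam α η s < q :=
  (continuousAt_hyperexpExponent fun i h => hη i (by linarith)).eventually_lt continuousAt_const
    (by simpa using hq)

theorem exists_hyperexpExponent_eq {S : Set ℝ} (hS : IsPreconnected S)
    (hpoles : ∀ i, -η i ∉ S) {l₁ l₂ : Filter ℝ} [l₁.NeBot] [l₂.NeBot] (h₁ : S ∈ l₁) (h₂ : S ∈ l₂)
    (hlt : ∀ᶠ s in l₁, hyperexpExponent μ σ lam α η s < q)
    (hgt : Tendsto (hyperexpExponent μ σ lam α η) l₂ atTop) :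
    ∃ s ∈ S, hyperexpExponent μ σ lam α η s = q :=
  hS.intermediate_value₂_eventually₂ (le_principal_iff.2 h₁) (le_principal_iff.2 h₂)
    (continuousOn_hyperexpExponent hpoles) continuousOn_const (hlt.mono fun _ => le_of_lt)
    (hgt.eventually_ge_atTop q)

theorem exists_pos_hyperexpExponent_eq (hσ : σ ≠ 0) (hq : 0 < q) (hη : ∀ i, 0 < η i) :
    ∃ s > 0, hyperexpExponent μ σ lam α η s = q :=
  exists_hyperexpExponent_eq (l₁ := 𝓝[>] 0) isPreconnected_Ioi
    (fun i h => (hη i).not_gt (neg_pos.1 h))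
    self_mem_nhdsWithin (Ioi_mem_atTop 0)
    ((eventually_hyperexpExponent_lt_nhds_zero hq fun i => (hη i).ne').filter_mono
      nhdsWithin_le_nhds)
    ((tendsto_hyperexpExponent_cobounded hσ).mono_left IsOrderBornology.atTop_le_cobounded)

theorem exists_eq_of_hyperexpExponent_eq {κ : Type*} [Fintype κ]
    (hκ : Fintype.card κ = Fintype.card ι + 1) (hσ : σ ≠ 0) (hq : 0 < q)
    (hη : ∀ i, 0 < η i) {r : κ → ℝ} (hr : Function.Injective r) (hneg : ∀ j, r j < 0)
    (hpole : ∀ j i, r j ≠ -η i) (hroot : ∀ j, hyperexpExponent μ σ lam α η (r j) = q)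
    {s : ℝ} (hs : s < 0) (hsη : ∀ i, s ≠ -η i) (hsq : hyperexpExponent μ σ lam α η s = q) :
    ∃ j, s = r j := by
  classical
  obtain ⟨x, hx, hxq⟩ := exists_pos_hyperexpExponent_eq hσ hq hη
  by_contra! hsr
  have hxr : x ∉ univ.image r := by
    simpa using fun j => (hneg j).trans hx |>.ne
  have hsT : s ∉ insert x (univ.image r) := by
    simpa [eq_comm (b := s)] using ⟨(hs.trans hx).ne, hsr⟩
  have hcard := card_le_of_forall_hyperexpExponent_eq hq.ne' (fun i => (hη i).ne')
    (insert s (insert x (univ.image r))) <| by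
      simp only [forall_mem_insert, forall_mem_image, mem_univ, forall_const]
      exact ⟨⟨hsη, hsq⟩, ⟨fun i => by linarith [hη i], hxq⟩, fun j => ⟨hpole j, hroot j⟩⟩
  rw [card_insert_of_notMem hsT, card_insert_of_notMem hxr, card_image_of_injective _ hr,
    card_univ, hκ] at hcard
  omega

end

theorem StrictAnti.notMem_Ioo_succ_castSucc {β : Type*} [Preorder β] {n : ℕ}
    {p : Fin (n + 1) → β} (hp : StrictAnti p) (k : Fin (n + 1)) (i : Fin n) :
    p k ∉ Set.Ioo (p i.succ) (p i.castSucc) := by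
  rintro ⟨h₁, h₂⟩
  have h₁ := Fin.lt_def.1 (hp.lt_iff_gt.1 h₁)
  have h₂ := Fin.lt_def.1 (hp.lt_iff_gt.1 h₂)
  simp only [Fin.val_succ, Fin.val_castSucc] at h₁ h₂
  omega

def poleNodes {m : ℕ} (η : Fin m → ℝ) : Fin (m + 1) → ℝ :=
  Fin.cons 0 (-η)

section
variable {m : ℕ} {μ σ lam q : ℝ} {α η : Fin m → ℝ}

@[simp]
theorem poleNodes_zero : poleNodes η 0 = 0 := rfl

@[simp]
theorem poleNodes_succ (i : Fin m) : poleNodes η i.succ = -η i := rfl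

theorem strictAnti_poleNodes (hηpos : ∀ i, 0 < η i) (hη : StrictMono η) :
    StrictAnti (poleNodes η) :=
  Fin.strictMono_cons (α := ℝᵒᵈ) |>.2 ⟨fun i => neg_lt_zero.2 (hηpos i), hη.neg⟩

theorem eventually_hyperexpExponent_lt_nhdsLT_poleNodes (hlam : 0 < lam) (hq : 0 < q)
    (hα : ∀ i, 0 < α i) (hηpos : ∀ i, 0 < η i) (hη : StrictMono η) (j : Fin (m + 1)) :
    ∀ᶠ s in 𝓝[<] (poleNodes η j), hyperexpExponent μ σ lam α η s < q := by
  induction j using Fin.cases with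
  | zero =>
    simpa using (eventually_hyperexpExponent_lt_nhds_zero hq fun i => (hηpos i).ne').filter_mono
      nhdsWithin_le_nhds
  | succ i =>
    simpa using
      (tendsto_hyperexpExponent_nhdsLT_pole hlam hα hηpos hη.injective i).eventually_lt_atBot q

theorem neg_notMem_Ioo_poleNodes (hηpos : ∀ i, 0 < η i) (hη : StrictMono η) (k i : Fin m) :
    -η k ∉ Set.Ioo (-η i) (poleNodes η i.castSucc) := by
  simpa using (strictAnti_poleNodes hηpos hη).notMem_Ioo_succ_castSucc k.succ i

theorem neg_notMem_Iio_poleNodes (hηpos : ∀ i, 0 < η i) (hη : StrictMono η) (k : Fin m) :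
    -η k ∉ Set.Iio (poleNodes η (Fin.last m)) := by
  simpa using (strictAnti_poleNodes hηpos hη).antitone (Fin.le_last k.succ)

theorem exists_hyperexpExponent_eq_Ioo (hlam : 0 < lam) (hq : 0 < q)
    (hα : ∀ i, 0 < α i) (hηpos : ∀ i, 0 < η i) (hη : StrictMono η) (i : Fin m) :
    ∃ s ∈ Set.Ioo (-η i) (poleNodes η i.castSucc), hyperexpExponent μ σ lam α η s = q := by
  have hlt : -η i < poleNodes η i.castSucc := by
    simpa using (strictAnti_poleNodes hηpos hη) i.castSucc_lt_succ
  exact exists_hyperexpExponent_eq isPreconnected_Ioo (neg_notMem_Ioo_poleNodes hηpos hη · i)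
    (Ioo_mem_nhdsLT hlt) (Ioo_mem_nhdsGT hlt)
    (eventually_hyperexpExponent_lt_nhdsLT_poleNodes hlam hq hα hηpos hη _)
    (tendsto_hyperexpExponent_nhdsGT_pole hlam hα hηpos hη.injective i)

theorem exists_hyperexpExponent_eq_Iio (hσ : σ ≠ 0) (hlam : 0 < lam) (hq : 0 < q)
    (hα : ∀ i, 0 < α i) (hηpos : ∀ i, 0 < η i) (hη : StrictMono η) :
    ∃ s ∈ Set.Iio (poleNodes η (Fin.last m)), hyperexpExponent μ σ lam α η s = q :=
  exists_hyperexpExponent_eq isPreconnected_Iio (neg_notMem_Iio_poleNodes hηpos hη)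
    self_mem_nhdsWithin (Iio_mem_atBot _)
    (eventually_hyperexpExponent_lt_nhdsLT_poleNodes hlam hq hα hηpos hη _)
    ((tendsto_hyperexpExponent_cobounded hσ).mono_left IsOrderBornology.atBot_le_cobounded)

theorem exists_interlacing_hyperexpExponent_eq (hσ : σ ≠ 0) (hlam : 0 < lam) (hq : 0 < q)
    (hα : ∀ i, 0 < α i) (hηpos : ∀ i, 0 < η i) (hη : StrictMono η) :
    ∃ r : Fin (m + 1) → ℝ, (∀ j, hyperexpExponent μ σ lam α η (r j) = q) ∧
      (∀ j, r j < poleNodes η j) ∧ (∀ i, -η i < r i.castSucc) ∧ (∀ j k, r j ≠ -η k) := by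
  choose x hx hxq using exists_hyperexpExponent_eq_Ioo (μ := μ) (σ := σ) hlam hq hα hηpos hη
  obtain ⟨y, hy, hyq⟩ := exists_hyperexpExponent_eq_Iio (μ := μ) hσ hlam hq hα hηpos hη
  refine ⟨Fin.lastCases y x, ?_, ?_, fun i => by simpa using (hx i).1, ?_⟩
  · simp [Fin.forall_fin_succ', hxq, hyq]
  · simpa [Fin.forall_fin_succ'] using ⟨fun i => (hx i).2, hy⟩
  · simp only [Fin.forall_fin_succ', Fin.lastCases_castSucc, Fin.lastCases_last]
    exact ⟨fun i k h => neg_notMem_Ioo_poleNodes hηpos hη k i (h ▸ hx i),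
      fun k h => neg_notMem_Iio_poleNodes hηpos hη k (h ▸ hy)⟩

end

theorem hyperexponential_roots_interlace_general (m : ℕ) (μ σ lam q : ℝ)
    (hσ : 0 < σ) (hlam : 0 < lam) (hq : 0 < q)
    (α : Fin m → ℝ) (hα : ∀ i, 0 < α i)
    (η : Fin m → ℝ) (hηpos : ∀ i, 0 < η i) (hηmono : StrictMono η)
    (ψ : ℝ → ℝ)
    (hψ : ∀ s, ψ s = μ * s + σ ^ 2 * s ^ 2 / 2 - lam * ∑ i, α i * s / (η i + s)) :
    ∃ ξ : Fin (m + 1) → ℝ,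
      (0 < ξ 0) ∧
      (∀ i : Fin m, ξ i.castSucc < η i ∧ η i < ξ i.succ) ∧
      (∀ i, ψ (-ξ i) = q) ∧
      (∀ s : ℝ, s < 0 → (∀ i, s ≠ -η i) → ψ s = q → ∃ i, s = -ξ i) := by
  obtain rfl : ψ = hyperexpExponent μ σ lam α η := funext hψ
  obtain ⟨r, hroot, hlt, hgt, hpole⟩ :=
    exists_interlacing_hyperexpExponent_eq hσ.ne' hlam hq hα hηpos hηmono
  have hsucc : ∀ i, r i.succ < -η i := fun i => by simpa using hlt i.succ
  have hneg : ∀ j, r j < 0 := fun j => (hlt j).trans_le <| by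
    simpa using (strictAnti_poleNodes hηpos hηmono).antitone (Fin.zero_le j)
  have hr : StrictAnti r := Fin.strictAnti_iff_succ_lt.2 fun i => (hsucc i).trans (hgt i)
  refine ⟨fun j => -r j, by simpa using hlt 0,
    fun i => ⟨by linarith [hgt i], by linarith [hsucc i]⟩, fun j => by simpa using hroot j,
    fun s hs hsη hsq => ?_⟩
  obtain ⟨j, rfl⟩ := exists_eq_of_hyperexpExponent_eq (by simp) hσ.ne' hq hηpos hr.injective hneg
    hpole hroot hs hsη hsq
  exact ⟨j, by simp⟩

/-- For the Laplace exponent of a Brownian motion plus a hyperexponential compound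
Poisson process (`σ > 0`), the Cramér–Lundberg equation `ψ(s) = q` has exactly `m+1`
roots on the negative half-line, interlacing with the poles `−η_i`. -/
theorem hyperexponential_roots_interlace (m : ℕ) (μ σ lam q : ℝ)
    (hσ : 0 < σ) (hlam : 0 < lam) (hq : 0 < q)
    (α : Fin m → ℝ) (hα : ∀ i, 0 < α i) (hαsum : ∑ i, α i = 1)
    (η : Fin m → ℝ) (hηpos : ∀ i, 0 < η i) (hηmono : StrictMono η)
    (ψ : ℝ → ℝ)
    (hψ : ∀ s, ψ s = μ * s + σ ^ 2 * s ^ 2 / 2 - lam * ∑ i, α i * s / (η i + s)) :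
    ∃ ξ : Fin (m + 1) → ℝ,
      (0 < ξ 0) ∧
      (∀ i : Fin m, ξ i.castSucc < η i ∧ η i < ξ i.succ) ∧
      (∀ i, ψ (-ξ i) = q) ∧
      (∀ s : ℝ, s < 0 → (∀ i, s ≠ -η i) → ψ s = q → ∃ i, s = -ξ i) :=
  hyperexponential_roots_interlace_general m μ σ lam q hσ hlam hq α hα η hηpos hηmono ψ hψ
end
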